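/- arXiv:2010.09141 — 4 statements merged into one kernel-verified Lean document; each statement's English description precedes it below -/
import Mathlib

section
/- Suppose A and B are finite subsets of a pseudometric space such that all pairwise distances within A are at least ℓ/2, all pairwise distances within B are at least ℓ/2, and |B| ≥ |A|. Then there exists an injective map f : A → B such that after removing f(A) from B, every remaining point of B is at distance at least ℓ/4 from every point of A; concretely, if for each a ∈ A we remove from B a closest point of B to a (choosing distinct points for distinct a, which is possible since each a has at most one point of B within distance ℓ/4), then every pair consisting of a point of A and a remaining point of B is at distance at least ℓ/4. -/
/-- Swap-removal lemma: with `div(A) ≥ ℓ/2`, `div(B) ≥ ℓ/2` and `|B| ≥ |A|`, there is an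
injective assignment `f : A → B` such that every point of `B` not of the form `f a`
is at distance at least `ℓ/4` from every point of `A`. -/
theorem swap_removal {U : Type*} [PseudoMetricSpace U] [DecidableEq U]
    (ℓ : ℝ) (hℓ : 0 ≤ ℓ) (A B : Finset U)
    (hA : ∀ x ∈ A, ∀ y ∈ A, x ≠ y → ℓ / 2 ≤ dist x y)
    (hB : ∀ x ∈ B, ∀ y ∈ B, x ≠ y → ℓ / 2 ≤ dist x y)
    (hcard : A.card ≤ B.card) :
    ∃ f : U → U, Set.InjOn f A ∧ (∀ a ∈ A, f a ∈ B) ∧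
      ∀ a ∈ A, ∀ b ∈ B, b ∉ A.image f → ℓ / 4 ≤ dist a b := by
  classical
  set P : U → Prop := fun a => ∃ b ∈ B, dist a b < ℓ / 4 with hP
  set near : U → U := fun a => if h : P a then h.choose else a with hnear
  have hnearB : ∀ a, P a → near a ∈ B := by
    intro a h
    simp only [hnear, dif_pos h]
    exact h.choose_spec.1
  have hneard : ∀ a, P a → dist a (near a) < ℓ / 4 := by
    intro a h
    simp only [hnear, dif_pos h]
    exact h.choose_spec.2
  set A₀ : Finset U := A.filter P with hA₀
  -- near is injective on A₀
  have hinj : Set.InjOn near A₀ := by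
    intro a ha a' ha' heq
    simp only [hA₀, Finset.coe_filter, Set.mem_setOf_eq] at ha ha'
    by_contra hne
    have h1 := hneard a ha.2
    have h2 := hneard a' ha'.2
    have : dist a a' ≤ dist a (near a) + dist (near a') a' := by
      rw [heq]; exact dist_triangle _ _ _
    rw [dist_comm (near a') a'] at this
    have := hA a ha.1 a' ha'.1 hne
    linarith
  set G : Finset U := A₀.image near with hG
  have hGB : G ⊆ B := by
    intro b hb
    simp only [hG, Finset.mem_image] at hb
    obtain ⟨a, ha, rfl⟩ := hb
    exact hnearB a (Finset.mem_filter.mp ha).2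
  have hGcard : G.card = A₀.card := Finset.card_image_of_injOn hinj
  set A₁ : Finset U := A \ A₀ with hA₁
  have hA₁card : A₁.card = A.card - A₀.card :=
    Finset.card_sdiff_of_subset (Finset.filter_subset _ _)
  set B₁ : Finset U := B \ G with hB₁
  have hB₁card : B₁.card = B.card - G.card := Finset.card_sdiff_of_subset hGB
  have hle : A₁.card ≤ B₁.card := by
    rw [hA₁card, hB₁card, hGcard]
    have hA₀A : A₀.card ≤ A.card := Finset.card_filter_le _ _
    omega
  obtain ⟨B₂, hB₂sub, hB₂card⟩ := Finset.exists_subset_card_eq hle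
  have e : (A₁ : Finset U) ≃ (B₂ : Finset U) := Finset.equivOfCardEq hB₂card.symm
  set f : U → U := fun a =>
    if a ∈ A₀ then near a else if h : a ∈ A₁ then (e ⟨a, h⟩ : U) else a with hf
  have hf0 : ∀ a ∈ A₀, f a = near a := fun a ha => by simp [hf, ha]
  have hf1 : ∀ a, (h : a ∈ A₁) → f a = (e ⟨a, h⟩ : U) := by
    intro a h
    have : a ∉ A₀ := (Finset.mem_sdiff.mp h).2
    simp [hf, this, h]
  have hsplit : ∀ a ∈ A, a ∈ A₀ ∨ a ∈ A₁ := by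
    intro a ha
    by_cases h : a ∈ A₀
    · exact Or.inl h
    · exact Or.inr (Finset.mem_sdiff.mpr ⟨ha, h⟩)
  have hB₂B₁ : ∀ {x : U}, x ∈ B₂ → x ∈ B₁ := fun hx => hB₂sub hx
  refine ⟨f, ?_, ?_, ?_⟩
  · -- InjOn
    intro a ha a' ha' heq
    rcases hsplit a ha with h0 | h1 <;> rcases hsplit a' ha' with h0' | h1'
    · rw [hf0 a h0, hf0 a' h0'] at heq
      exact hinj (by exact_mod_cast h0) (by exact_mod_cast h0') heq
    · rw [hf0 a h0, hf1 a' h1'] at heq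
      exfalso
      have : (e ⟨a', h1'⟩ : U) ∈ B₁ := hB₂B₁ (e ⟨a', h1'⟩).2
      rw [← heq] at this
      exact (Finset.mem_sdiff.mp this).2 (Finset.mem_image_of_mem near h0)
    · rw [hf0 a' h0', hf1 a h1] at heq
      exfalso
      have : (e ⟨a, h1⟩ : U) ∈ B₁ := hB₂B₁ (e ⟨a, h1⟩).2
      rw [heq] at this
      exact (Finset.mem_sdiff.mp this).2 (Finset.mem_image_of_mem near h0')
    · rw [hf1 a h1, hf1 a' h1'] at heq
      have := e.injective (Subtype.ext heq)
      exact congrArg Subtype.val this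
  · -- maps into B
    intro a ha
    rcases hsplit a ha with h0 | h1
    · rw [hf0 a h0]; exact hnearB a (Finset.mem_filter.mp h0).2
    · rw [hf1 a h1]
      exact (Finset.mem_sdiff.mp (hB₂B₁ (e ⟨a, h1⟩).2)).1
  · -- distance condition
    intro a ha b hb hbimg
    by_contra hlt
    push_neg at hlt
    have hPa : P a := ⟨b, hb, hlt⟩
    have ha0 : a ∈ A₀ := Finset.mem_filter.mpr ⟨ha, hPa⟩
    have hbeq : b = near a := by
      by_contra hne
      have h1 := hneard a hPa
      have h2 := hB b hb (near a) (hnearB a hPa) hne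
      have : dist b (near a) ≤ dist b a + dist a (near a) := dist_triangle _ _ _
      rw [dist_comm b a] at this
      linarith
    apply hbimg
    exact Finset.mem_image.mpr ⟨a, ha, by rw [hf0 a ha0, hbeq]⟩
end

section
/- Let Z be a finite set of points in a pseudometric space partitioned into m color classes Z_1, ..., Z_m, such that within each color class all pairwise distances are at least m·d₂. Form the graph G_Z on vertex set Z with an edge between z₁ and z₂ whenever d(z₁,z₂) < d₂. Then any two points x, y in the same connected component of G_Z satisfy d(x,y) < (m−1)·d₂, and no connected component contains two points of the same color. -/
/-!
Along a path `v₀, …, v_L` of the graph, consecutive vertices are at distance `< d₂`, so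
`dist vᵢ vⱼ < (j - i) d₂`. If `L ≥ m`, two of the `m + 1` distinct vertices `v₀, …, v_m` share a
color, and their distance `< m d₂` contradicts the separation of that color class. Hence every
path has length `L ≤ m - 1`, which bounds the distance of its endpoints by `(m - 1) d₂ < m d₂`,
so they also have different colors.
-/

section WalkDistance

open SimpleGraph

variable {V ι : Type*} [PseudoMetricSpace V] {G : SimpleGraph V} {d : ℝ} {u v : V}

theorem dist_getVert_lt_of_adj (hadj : ∀ x y, G.Adj x y → dist x y < d) (p : G.Walk u v)
    {i j : ℕ} (hij : i < j) (hj : j ≤ p.length) :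
    dist (p.getVert i) (p.getVert j) < (j - i : ℕ) * d := by
  induction j, hij using Nat.le_induction with
  | base => simpa using hadj _ _ (p.adj_getVert_succ hj)
  | succ j hij ih =>
    calc dist (p.getVert i) (p.getVert (j + 1))
        ≤ dist (p.getVert i) (p.getVert j) + dist (p.getVert j) (p.getVert (j + 1)) :=
          dist_triangle _ _ _
      _ < (j - i : ℕ) * d + d := add_lt_add (ih (by omega)) (hadj _ _ (p.adj_getVert_succ hj))
      _ = (j + 1 - i : ℕ) * d := by rw [Nat.sub_add_comm (Nat.le_of_succ_le hij)]; push_cast; ring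

theorem dist_lt_length_mul_of_adj (hadj : ∀ x y, G.Adj x y → dist x y < d) (p : G.Walk u v)
    (hp : 0 < p.length) : dist u v < p.length * d := by
  simpa using dist_getVert_lt_of_adj hadj p hp le_rfl

theorem length_lt_card_of_isPath_of_separated [Fintype ι] (c : V → ι)
    (hadj : ∀ x y, G.Adj x y → dist x y < d)
    (hsep : ∀ x y, x ≠ y → c x = c y → Fintype.card ι * d ≤ dist x y)
    {p : G.Walk u v} (hp : p.IsPath) : p.length < Fintype.card ι := by
  by_contra! hlen
  have hcolor_inj : Function.Injective fun i : Fin (Fintype.card ι + 1) ↦ c (p.getVert i) := by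
    suffices ∀ i j : Fin (Fintype.card ι + 1), i < j → c (p.getVert i) ≠ c (p.getVert j) by
      intro i j hc
      by_contra hne
      rcases lt_or_gt_of_ne hne with h | h
      exacts [this i j h hc, this j i h hc.symm]
    intro i j hij hc
    have hj : (j : ℕ) ≤ p.length := by omega
    have hdist := dist_getVert_lt_of_adj hadj p hij hj
    have hd : 0 < d := pos_of_mul_pos_right (dist_nonneg.trans_lt hdist) (by positivity)
    have hne : p.getVert i ≠ p.getVert j := fun h ↦
      hij.ne (Fin.ext (hp.getVert_injOn (by simp; omega) (by simpa using hj) h))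
    have hji : ((j - i : ℕ) : ℝ) ≤ Fintype.card ι := by exact_mod_cast (by omega)
    linarith [hsep _ _ hne hc, mul_le_mul_of_nonneg_right hji hd.le]
  simpa using Fintype.card_le_of_injective _ hcolor_inj

end WalkDistance

theorem component_width_disjoint_general {U : Type*} [PseudoMetricSpace U]
    (m : ℕ) (d₂ : ℝ) (hd₂ : 0 < d₂)
    (Z : Finset U) (color : U → Fin m)
    (hsep : ∀ x ∈ Z, ∀ y ∈ Z, x ≠ y → color x = color y → (m : ℝ) * d₂ ≤ dist x y)
    (G : SimpleGraph {z // z ∈ Z})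
    (hG : ∀ a b : {z // z ∈ Z}, G.Adj a b ↔ (a ≠ b ∧ dist (a : U) (b : U) < d₂)) :
    ∀ a b : {z // z ∈ Z}, a ≠ b → G.Reachable a b →
      dist (a : U) (b : U) < ((m : ℝ) - 1) * d₂ ∧ color (a : U) ≠ color (b : U) := by
  intro a b hab hreach
  obtain ⟨p, hp⟩ := hreach.exists_isPath
  have hadj : ∀ x y, G.Adj x y → dist x y < d₂ := fun x y h ↦ ((hG x y).1 h).2
  have hlen : p.length < m := by
    simpa using length_lt_card_of_isPath_of_separated (color ∘ Subtype.val) hadj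
      (fun x y hxy hc ↦ by
        simpa [Subtype.dist_eq] using hsep x x.2 y y.2 (Subtype.coe_ne_coe.2 hxy) hc) hp
  have hpos : 0 < p.length := Nat.pos_of_ne_zero fun h ↦ hab (p.eq_of_length_eq_zero h)
  have hdist : dist (a : U) (b : U) < ((m : ℝ) - 1) * d₂ :=
    calc dist (a : U) (b : U) < p.length * d₂ := dist_lt_length_mul_of_adj hadj p hpos
      _ ≤ ((m : ℝ) - 1) * d₂ := by
        gcongr
        exact le_sub_iff_add_le.2 (by exact_mod_cast hlen)
  refine ⟨hdist, fun hc ↦ ?_⟩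
  linarith [hsep a a.2 b b.2 (Subtype.coe_ne_coe.2 hab) hc]

/-- Lemma 1 (disjoint groups): if within each of the `m` color classes all pairwise distances
are at least `m·d₂`, then in the graph joining points at distance `< d₂`, any two distinct
points in the same connected component are at distance `< (m-1)·d₂` and have different colors. -/
theorem component_width_disjoint {U : Type*} [PseudoMetricSpace U]
    (m : ℕ) (hm : 1 ≤ m) (d₂ : ℝ) (hd₂ : 0 < d₂)
    (Z : Finset U) (color : U → Fin m)
    (hsep : ∀ x ∈ Z, ∀ y ∈ Z, x ≠ y → color x = color y → (m : ℝ) * d₂ ≤ dist x y)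
    (G : SimpleGraph {z // z ∈ Z})
    (hG : ∀ a b : {z // z ∈ Z}, G.Adj a b ↔ (a ≠ b ∧ dist (a : U) (b : U) < d₂)) :
    ∀ a b : {z // z ∈ Z}, a ≠ b → G.Reachable a b →
      dist (a : U) (b : U) < ((m : ℝ) - 1) * d₂ ∧ color (a : U) ≠ color (b : U) :=
  component_width_disjoint_general m d₂ hd₂ Z color hsep G hG
end

section
/- Let S* be a set of k points in a finite pseudometric space with minimum pairwise distance ℓ*. Suppose a greedy process builds a set S by repeatedly adding a point of U maximizing its minimum distance to the points already chosen, starting from the empty set and stopping at k points. Then the minimum pairwise distance of S is at least ℓ*/2. -/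
/-- Pigeonhole: if `T` has fewer points than `Sstar` and `Sstar` has pairwise
distances at least `ℓ`, then some point of `Sstar` is at distance at least `ℓ/2`
from every point of `T`. -/
lemma gmm_far_point {U : Type*} [PseudoMetricSpace U] [DecidableEq U]
    (ℓ : ℝ) (Sstar T : Finset U)
    (hdiv : ∀ u ∈ Sstar, ∀ v ∈ Sstar, u ≠ v → ℓ ≤ dist u v)
    (hlt : T.card < Sstar.card) :
    ∃ y ∈ Sstar, ∀ s ∈ T, ℓ / 2 ≤ dist y s := by
  by_contra h'
  push_neg at h'
  have h'' : ∀ y : U, ∃ s : U, y ∈ Sstar → s ∈ T ∧ dist y s < ℓ / 2 := by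
    intro y
    by_cases hy : y ∈ Sstar
    · obtain ⟨s, hs, hd⟩ := h' y hy
      exact ⟨s, fun _ => ⟨hs, hd⟩⟩
    · exact ⟨y, fun hy' => absurd hy' hy⟩
  choose f hf using h''
  obtain ⟨u, hu, v, hv, huv, hfe⟩ :=
    Finset.exists_ne_map_eq_of_card_lt_of_maps_to hlt (fun y hy => (hf y hy).1)
  have h1 := (hf u hu).2
  have h2 := (hf v hv).2
  have hd := hdiv u hu v hv huv
  have : dist u v ≤ dist u (f u) + dist (f v) v := by
    rw [hfe]; exact dist_triangle u (f v) v
  rw [dist_comm (f v) v] at this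
  linarith

/-- GMM analysis: if `S*` has `k` points with pairwise distances at least `ℓ*`, then the
greedy farthest-first process run for `k` points produces a set with pairwise distances
at least `ℓ*/2`. -/
theorem gmm_half_approx {U : Type*} [PseudoMetricSpace U] [Fintype U] [DecidableEq U]
    (k : ℕ) (hk : 2 ≤ k) (hUk : k ≤ Fintype.card U)
    (Sstar : Finset U) (hcard : Sstar.card = k)
    (ℓ : ℝ) (hdiv : ∀ u ∈ Sstar, ∀ v ∈ Sstar, u ≠ v → ℓ ≤ dist u v)
    (S : ℕ → Finset U) (u₀ : U) (hS0 : S 0 = {u₀})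
    (hstep : ∀ t, t < k - 1 → ∃ x : U, S (t + 1) = insert x (S t) ∧
      ∀ y : U, sInf ((fun s => dist y s) '' (S t : Set U)) ≤
        sInf ((fun s => dist x s) '' (S t : Set U))) :
    ∀ u ∈ S (k - 1), ∀ v ∈ S (k - 1), u ≠ v → ℓ / 2 ≤ dist u v := by
  by_cases hℓ : ℓ ≤ 0
  · intro u _ v _ _
    exact le_trans (by linarith) dist_nonneg
  push_neg at hℓ
  have main : ∀ t, t ≤ k - 1 → (S t).Nonempty ∧ (S t).card ≤ t + 1 ∧
      (∀ u ∈ S t, ∀ v ∈ S t, u ≠ v → ℓ / 2 ≤ dist u v) := by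
    intro t
    induction t with
    | zero =>
      intro _
      refine ⟨?_, ?_, ?_⟩
      · rw [hS0]; exact ⟨u₀, Finset.mem_singleton_self u₀⟩
      · rw [hS0]; simp
      · intro u hu v hv huv
        rw [hS0, Finset.mem_singleton] at hu hv
        exact absurd (hu.trans hv.symm) huv
    | succ t ih =>
      intro ht
      have ht' : t < k - 1 := lt_of_lt_of_le (Nat.lt_succ_self t) ht
      obtain ⟨hne, hcardle, hpair⟩ := ih (le_of_lt ht')
      obtain ⟨x, hins, hmax⟩ := hstep t ht'
      -- pigeonhole: find a far point y
      have hlt : (S t).card < Sstar.card := by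
        rw [hcard]
        omega
      obtain ⟨y, _, hy⟩ := gmm_far_point ℓ Sstar (S t) hdiv hlt
      -- sInf for y is ≥ ℓ/2
      have hyinf : ℓ / 2 ≤ sInf ((fun s => dist y s) '' (S t : Set U)) := by
        apply le_csInf
        · obtain ⟨s, hs⟩ := hne
          exact ⟨dist y s, ⟨s, hs, rfl⟩⟩
        · rintro _ ⟨s, hs, rfl⟩
          exact hy s hs
      have hxinf : ℓ / 2 ≤ sInf ((fun s => dist x s) '' (S t : Set U)) :=
        le_trans hyinf (hmax y)
      have hbdd : BddBelow ((fun s => dist x s) '' (S t : Set U)) := by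
        exact ⟨0, by rintro _ ⟨s, _, rfl⟩; exact dist_nonneg⟩
      have hxfar : ∀ s ∈ S t, ℓ / 2 ≤ dist x s := by
        intro s hs
        exact le_trans hxinf (csInf_le hbdd ⟨s, hs, rfl⟩)
      have hxnot : x ∉ S t := by
        intro hx
        have := hxfar x hx
        rw [dist_self] at this
        linarith
      refine ⟨?_, ?_, ?_⟩
      · rw [hins]; exact ⟨x, Finset.mem_insert_self x _⟩
      · rw [hins, Finset.card_insert_of_notMem hxnot]
        omega
      · intro u hu v hv huv
        rw [hins, Finset.mem_insert] at hu hv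
        rcases hu with rfl | hu
        · rcases hv with rfl | hv
          · exact absurd rfl huv
          · exact hxfar v hv
        · rcases hv with rfl | hv
          · rw [dist_comm]; exact hxfar u hu
          · exact hpair u hu v hv huv
  exact (main (k - 1) le_rfl).2.2
end

section
/- Let I be a set of points in a pseudometric space with div(I) ≥ ℓ/2, and let F* be a set of points with div(F*) ≥ ℓ and |F*| ≥ |I| + r. Suppose the greedy farthest-first process, initialized with I, adds r points from U one at a time, each time selecting a point maximizing its minimum distance to all points selected so far (including I). Then the resulting set I ∪ E of |I| + r points satisfies div(I ∪ E) ≥ ℓ/2. -/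
/-- GMM with initialization: if `div(I) ≥ ℓ/2` and there is a set `F*` with `div(F*) ≥ ℓ` and
`|F*| ≥ |I| + r`, then running the greedy farthest-first process, initialized with `I`, for
`r` additional points yields a set `I ∪ E` with all pairwise distances at least `ℓ/2`. -/
theorem gmm_initialized_half_approx {U : Type*} [PseudoMetricSpace U] [Fintype U]
    [DecidableEq U]
    (ℓ : ℝ) (hℓ : 0 ≤ ℓ) (r : ℕ)
    (I : Finset U) (hI : ∀ x ∈ I, ∀ y ∈ I, x ≠ y → ℓ / 2 ≤ dist x y)
    (F : Finset U) (hF : ∀ x ∈ F, ∀ y ∈ F, x ≠ y → ℓ ≤ dist x y)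
    (hFcard : I.card + r ≤ F.card)
    (E : ℕ → Finset U) (hE0 : E 0 = ∅)
    (hstep : ∀ t, t < r → ∃ x : U, E (t + 1) = insert x (E t) ∧
      ∀ y : U, sInf ((fun s => dist y s) '' ((I ∪ E t : Finset U) : Set U)) ≤
        sInf ((fun s => dist x s) '' ((I ∪ E t : Finset U) : Set U))) :
    ∀ u ∈ I ∪ E r, ∀ v ∈ I ∪ E r, u ≠ v → ℓ / 2 ≤ dist u v := by
  suffices h : ∀ t, t ≤ r →
      (∀ u ∈ I ∪ E t, ∀ v ∈ I ∪ E t, u ≠ v → ℓ / 2 ≤ dist u v) ∧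
      (I ∪ E t).card ≤ I.card + t by
    exact (h r le_rfl).1
  intro t
  induction t with
  | zero =>
    intro _
    rw [hE0]
    simpa using hI
  | succ t ih =>
    intro htr
    have ht : t < r := htr
    obtain ⟨hpair, hcard⟩ := ih ht.le
    obtain ⟨x, hEx, hmax⟩ := hstep t ht
    set S := I ∪ E t with hSdef
    have hSnew : I ∪ E (t + 1) = insert x S := by
      rw [hEx, hSdef]
      ext u
      simp only [Finset.mem_union, Finset.mem_insert]
      tauto
    -- there is an "unblocked" point of F
    have hblock : ∃ f ∈ F, ∀ s ∈ S, ℓ / 2 ≤ dist f s := by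
      by_contra hcon
      push_neg at hcon
      have hch : ∀ f : U, ∃ s : U, f ∈ F → s ∈ S ∧ dist f s < ℓ / 2 := by
        intro f
        by_cases hf : f ∈ F
        · obtain ⟨s, hs, hds⟩ := hcon f hf
          exact ⟨s, fun _ => ⟨hs, hds⟩⟩
        · exact ⟨f, fun h => absurd h hf⟩
      choose g hg using hch
      have hmaps : ∀ f ∈ F, g f ∈ S := fun f hf => (hg f hf).1
      have hinj : Set.InjOn g F := by
        intro f hf f' hf' hgg
        by_contra hne
        have h1 := (hg f hf).2
        have h2 := (hg f' hf').2
        have h3 := hF f hf f' hf' hne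
        have h4 := dist_triangle f (g f) f'
        have h5 : dist (g f') f' = dist f' (g f') := dist_comm _ _
        rw [hgg] at h1 h4
        linarith
      have hle : F.card ≤ S.card := Finset.card_le_card_of_injOn g hmaps hinj
      have : I.card + r ≤ I.card + t := le_trans (hFcard.trans hle) hcard
      omega
    obtain ⟨f, hfF, hf⟩ := hblock
    have hxS : ∀ s ∈ S, ℓ / 2 ≤ dist x s := by
      rcases S.eq_empty_or_nonempty with hS | hS
      · intro s hs; rw [hS] at hs; exact absurd hs (Finset.notMem_empty s)
      · have hne : ((fun s => dist f s) '' (S : Set U)).Nonempty :=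
          (hS.to_set.image _)
        have hfinf : ℓ / 2 ≤ sInf ((fun s => dist f s) '' (S : Set U)) := by
          apply le_csInf hne
          rintro _ ⟨s, hs, rfl⟩
          exact hf s hs
        have hxinf : ℓ / 2 ≤ sInf ((fun s => dist x s) '' (S : Set U)) :=
          hfinf.trans (hmax f)
        intro s hs
        refine hxinf.trans (csInf_le ?_ ⟨s, hs, rfl⟩)
        exact (S.finite_toSet.image _).bddBelow
    constructor
    · rw [hSnew]
      intro u hu v hv huv
      rw [Finset.mem_insert] at hu hv
      rcases hu with rfl | hu <;> rcases hv with rfl | hv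
      · exact absurd rfl huv
      · exact hxS v hv
      · rw [dist_comm]; exact hxS u hu
      · exact hpair u hu v hv huv
    · rw [hSnew]
      calc (insert x S).card ≤ S.card + 1 := Finset.card_insert_le _ _
        _ ≤ I.card + t + 1 := by omega
end
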